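/- For all n ≥ 0, the coefficient of x^n in the formal power series (1 − 3·log(1−x))/(1−x)^4 over ℚ equals (1/4)·(n+1)·(n+2)·(n+3)·(2·H_{n+3} − 3). -/

import Mathlib

open PowerSeries

def H (m : ℕ) : ℚ := ∑ k ∈ Finset.range m, (1 : ℚ) / (k + 1)

noncomputable def logOneSub : ℚ⟦X⟧ := PowerSeries.mk fun k => if k = 0 then 0 else -(1 : ℚ) / k

lemma H_succ (m : ℕ) : H (m + 1) = H m + 1 / (m + 1) := by
  simp [H, Finset.sum_range_succ]

noncomputable def g (m : ℕ) : ℚ :=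
  (1 / 4 : ℚ) * ((m : ℚ) + 1) * ((m : ℚ) + 2) * ((m : ℚ) + 3) * (2 * H (m + 3) - 3)

noncomputable def G : ℚ⟦X⟧ := PowerSeries.mk g

lemma key (m : ℕ) :
    g (m + 4) - 4 * g (m + 3) + 6 * g (m + 2) - 4 * g (m + 1) + g m = 3 / ((m : ℚ) + 4) := by
  have h7 : m + 4 + 3 = m + 6 + 1 := by ring
  have h6 : m + 3 + 3 = m + 5 + 1 := by ring
  have h5 : m + 2 + 3 = m + 4 + 1 := by ring
  have h4 : m + 1 + 3 = m + 3 + 1 := by ring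
  have e6 : m + 6 = m + 5 + 1 := by ring
  have e5 : m + 5 = m + 4 + 1 := by ring
  have e4 : m + 4 = m + 3 + 1 := by ring
  simp only [g, h7, h6, h5, h4, e6, e5, e4, H_succ]
  have n4 : ((m : ℚ) + 4) ≠ 0 := by positivity
  have n5 : ((m : ℚ) + 5) ≠ 0 := by positivity
  have n6 : ((m : ℚ) + 6) ≠ 0 := by positivity
  have n7 : ((m : ℚ) + 7) ≠ 0 := by positivity
  push_cast
  field_simp
  ring

lemma factored : (1 - X) ^ 4 * G = 1 - 3 * logOneSub := by
  have c3 : (3 : ℚ⟦X⟧) = (C (3:ℚ) : ℚ⟦X⟧) := (map_ofNat (C (R := ℚ)) 3).symm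
  have c4 : (4 : ℚ⟦X⟧) = (C (4:ℚ) : ℚ⟦X⟧) := (map_ofNat (C (R := ℚ)) 4).symm
  have c6 : (6 : ℚ⟦X⟧) = (C (6:ℚ) : ℚ⟦X⟧) := (map_ofNat (C (R := ℚ)) 6).symm
  have expand : (1 - X : ℚ⟦X⟧) ^ 4 * G
      = G - 4 * (G * X ^ 1) + 6 * (G * X ^ 2) - 4 * (G * X ^ 3) + G * X ^ 4 := by ring
  ext n
  rw [expand]
  simp only [c3, c4, c6, map_sub, map_add, coeff_C_mul, coeff_one, coeff_mul_X_pow', G,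
    coeff_mk, logOneSub]
  rcases n with _ | _ | _ | _ | m
  · norm_num [g, H, Finset.sum_range_succ]
  · norm_num [g, H, Finset.sum_range_succ]
  · norm_num [g, H, Finset.sum_range_succ]
  · norm_num [g, H, Finset.sum_range_succ]
  · have h := key m
    have em : m + 1 + 1 + 1 + 1 = m + 4 := rfl
    have e1 : m + 4 - 1 = m + 3 := rfl
    have e2 : m + 4 - 2 = m + 2 := rfl
    have e3 : m + 4 - 3 = m + 1 := rfl
    have e4 : m + 4 - 4 = m := rfl
    simp only [em, e1, e2, e3, e4, if_pos (by omega : 1 ≤ m + 4), if_pos (by omega : 2 ≤ m + 4),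
      if_pos (by omega : 3 ≤ m + 4), if_pos (by omega : 4 ≤ m + 4),
      if_neg (by omega : ¬ (m + 4 = 0))]
    push_cast
    have hne : ((m : ℚ) + 4) ≠ 0 := by positivity
    have : g (m + 4) - 4 * g (m + 3) + 6 * g (m + 2) - 4 * g (m + 1) + g m
        = 3 / ((m : ℚ) + 4) := h
    field_simp at this ⊢
    linarith [this]

theorem egf_coeff (n : ℕ) :
    coeff n ((1 - 3 * logOneSub) * ((1 - X) ^ 4)⁻¹)
      = (1 / 4 : ℚ) * ((n : ℚ) + 1) * ((n : ℚ) + 2) * ((n : ℚ) + 3) * (2 * H (n + 3) - 3) := by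
  have hc : constantCoeff ((1 - X : ℚ⟦X⟧) ^ 4) ≠ 0 := by
    simp [constantCoeff_X]
  have : (1 - 3 * logOneSub) * ((1 - X : ℚ⟦X⟧) ^ 4)⁻¹ = G := by
    rw [← factored, mul_comm ((1 - X : ℚ⟦X⟧) ^ 4) G, mul_assoc,
      PowerSeries.mul_inv_cancel _ hc, mul_one]
  rw [this]
  simp [G, g]
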